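/- Let μ, ν be finite measures on ℝ with finite first moments and μ ≤_E ν. Define T^ν(μ) as the measure maximal in convex order among {η : μ ≤_cx η ≤ ν}. Then P_{T^ν(μ)} = (\tilde{P})^c, where \tilde{P}(k) = min{P_ν(k), C_ν(k) + μ(ℝ)k - \bar{μ}} and C_ν(k) = ∫(x-k)^+ ν(dx). -/

import Mathlib

/-!
Since `T ≤ ν`, both `P_T` and `C_T` are dominated by those of `ν`, and put–call parity
`P_η(k) - C_η(k) = η(ℝ) k - η̄` holds with the same right-hand side for every `η ≥_cx μ`; hence
`P_T` is a convex minorant of `P̃` and lies below its hull `c`.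

Conversely, the gap `c - P_T` is bounded by both `P_{ν-T}` and `C_{ν-T}`, so it vanishes at
`±∞`. If it exceeded some `ε > 0` at `k`, take the maximal interval `(u, v)` around `k` on which
it exceeds `ε`. At every point of `(u, v)` the unused measure `ν - T` has mass on both sides, and
then `T` has no mass nearby: otherwise a small piece of `T` could be spread onto `ν - T` to the
left and right without changing mass and mean, giving a measure between `μ` and `ν` strictly
above `T` in convex order. So `P_T` is affine on `[u, v]`, and the convex `c`, which is within `ε`
of `P_T` at `u` and `v`, is within `ε` of it at `k`.
-/

open MeasureTheory Set Filter

noncomputable def pot (eta : Measure ℝ) (k : ℝ) : ℝ := ∫ x, max (k - x) 0 ∂eta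

noncomputable def cpot (eta : Measure ℝ) (k : ℝ) : ℝ := ∫ x, max (x - k) 0 ∂eta

/-- `c` is the convex hull (largest convex minorant) of `f`. -/
def IsConvexHull (f c : ℝ → ℝ) : Prop :=
  ConvexOn ℝ Set.univ c ∧ (∀ x, c x ≤ f x) ∧
    ∀ g : ℝ → ℝ, ConvexOn ℝ Set.univ g → (∀ x, g x ≤ f x) → ∀ x, g x ≤ c x

/-- Convex order: `∫ f dη ≤ ∫ f dχ` for all convex `f` for which both integrals exist. -/
def Cx (eta chi : Measure ℝ) : Prop :=
  ∀ f : ℝ → ℝ, ConvexOn ℝ Set.univ f → Integrable f eta → Integrable f chi →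
    ∫ x, f x ∂eta ≤ ∫ x, f x ∂chi

/-- Extended convex order: `∫ f dη ≤ ∫ f dχ` for all nonnegative convex `f`. -/
def ECx (eta chi : Measure ℝ) : Prop :=
  ∀ f : ℝ → ℝ, ConvexOn ℝ Set.univ f → (∀ x, 0 ≤ f x) →
    ∫⁻ x, ENNReal.ofReal (f x) ∂eta ≤ ∫⁻ x, ENNReal.ofReal (f x) ∂chi

/-- The class `𝒟(a, b)`: nonnegative, nondecreasing, convex functions vanishing at `-∞`
and asymptotic to `a * z - b` at `+∞`. -/
def MemD (a b : ℝ) (f : ℝ → ℝ) : Prop :=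
  ConvexOn ℝ Set.univ f ∧ Monotone f ∧ (∀ x, 0 ≤ f x) ∧
    Tendsto f atBot (nhds 0) ∧
    Tendsto (fun z => f z - (a * z - b)) atTop (nhds 0)

/-- `S` is the shadow of `μ` in `ν`. -/
def IsShadow (mu nu S : Measure ℝ) : Prop :=
  Cx mu S ∧ S ≤ nu ∧ ∀ eta : Measure ℝ, Cx mu eta → eta ≤ nu → Cx S eta

/-- `T` is the counter-shadow of `μ` in `ν`. -/
def IsCounterShadow (mu nu T : Measure ℝ) : Prop :=
  Cx mu T ∧ T ≤ nu ∧ ∀ eta : Measure ℝ, Cx mu eta → eta ≤ nu → Cx eta T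

lemma ConvexOn.continuous {E : Type*} [NormedAddCommGroup E] [NormedSpace ℝ E]
    [FiniteDimensional ℝ E] {f : E → ℝ} (hf : ConvexOn ℝ univ f) : Continuous f :=
  continuousOn_univ.1 (hf.continuousOn isOpen_univ)

lemma convexOn_integral {α : Type*} [MeasurableSpace α] {μ : Measure α} {F : ℝ → α → ℝ}
    (hF : ∀ x, ConvexOn ℝ univ (fun k => F k x)) (hint : ∀ k, Integrable (F k) μ) :
    ConvexOn ℝ univ (fun k => ∫ x, F k x ∂μ) := by
  refine ⟨convex_univ, fun k _ l _ a b ha hb hab => ?_⟩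
  calc ∫ x, F (a • k + b • l) x ∂μ ≤ ∫ x, (a * F k x + b * F l x) ∂μ :=
        integral_mono (hint _) (((hint k).const_mul a).add ((hint l).const_mul b))
          fun x => (hF x).2 (mem_univ k) (mem_univ l) ha hb hab
    _ = a • ∫ x, F k x ∂μ + b • ∫ x, F l x ∂μ := by
        rw [integral_add ((hint k).const_mul a) ((hint l).const_mul b), integral_const_mul,
          integral_const_mul, smul_eq_mul, smul_eq_mul]

section Potentials

variable {η : Measure ℝ}

lemma pot_eq_zero_of_measure_Iio_eq_zero {k : ℝ} (h : η (Iio k) = 0) : pot η k = 0 := by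
  refine integral_eq_zero_of_ae (measure_mono_null (fun x hx => ?_) h)
  by_contra hxk
  exact hx (max_eq_right (by simpa using hxk))

lemma cpot_eq_zero_of_measure_Ioi_eq_zero {k : ℝ} (h : η (Ioi k) = 0) : cpot η k = 0 := by
  refine integral_eq_zero_of_ae (measure_mono_null (fun x hx => ?_) h)
  by_contra hxk
  exact hx (max_eq_right (by simpa using hxk))

variable [IsFiniteMeasure η]

lemma integrable_affine (hη : Integrable (fun x => x) η) (A B : ℝ) :
    Integrable (fun x => A * x + B) η :=
  (hη.const_mul A).add (integrable_const B)

lemma integral_affine (hη : Integrable (fun x => x) η) (A B : ℝ) :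
    ∫ x, (A * x + B) ∂η = A * ∫ x, x ∂η + B * η.real univ := by
  rw [integral_add (hη.const_mul A) (integrable_const B), integral_const_mul, integral_const,
    smul_eq_mul, mul_comm B]

lemma integrable_put (hη : Integrable (fun x => x) η) (k : ℝ) :
    Integrable (fun x => max (k - x) 0) η :=
  ((integrable_const k).sub hη).pos_part

lemma integrable_call (hη : Integrable (fun x => x) η) (k : ℝ) :
    Integrable (fun x => max (x - k) 0) η :=
  (hη.sub (integrable_const k)).pos_part

lemma convexOn_put (k : ℝ) : ConvexOn ℝ univ (fun x : ℝ => max (k - x) 0) :=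
  ((convexOn_const k convex_univ).sub (concaveOn_id convex_univ)).sup
    (convexOn_const 0 convex_univ)

lemma convexOn_call (k : ℝ) : ConvexOn ℝ univ (fun x : ℝ => max (x - k) 0) :=
  ((convexOn_id convex_univ).sub (concaveOn_const k convex_univ)).sup
    (convexOn_const 0 convex_univ)

lemma convexOn_pot (hη : Integrable (fun x => x) η) : ConvexOn ℝ univ (pot η) :=
  convexOn_integral convexOn_call (integrable_put hη)

lemma convexOn_cpot (hη : Integrable (fun x => x) η) : ConvexOn ℝ univ (cpot η) :=
  convexOn_integral convexOn_put (integrable_call hη)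

lemma continuous_pot (hη : Integrable (fun x => x) η) : Continuous (pot η) :=
  (convexOn_pot hη).continuous

lemma continuous_cpot (hη : Integrable (fun x => x) η) : Continuous (cpot η) :=
  (convexOn_cpot hη).continuous

lemma pot_sub_cpot (hη : Integrable (fun x => x) η) (k : ℝ) :
    pot η k - cpot η k = ∫ x, (-1 * x + k) ∂η := by
  rw [pot, cpot, ← integral_sub (integrable_put hη k) (integrable_call hη k)]
  congr 1 with x
  rcases le_total x k with h | h
  · rw [max_eq_left (by linarith), max_eq_right (by linarith)]; ring
  · rw [max_eq_right (by linarith), max_eq_left (by linarith)]; ring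

lemma pot_add_measure {χ : Measure ℝ} [IsFiniteMeasure χ] (hη : Integrable (fun x => x) η)
    (hχ : Integrable (fun x => x) χ) (k : ℝ) : pot (η + χ) k = pot η k + pot χ k :=
  integral_add_measure (integrable_put hη k) (integrable_put hχ k)

lemma cpot_add_measure {χ : Measure ℝ} [IsFiniteMeasure χ] (hη : Integrable (fun x => x) η)
    (hχ : Integrable (fun x => x) χ) (k : ℝ) : cpot (η + χ) k = cpot η k + cpot χ k :=
  integral_add_measure (integrable_call hη k) (integrable_call hχ k)

lemma tendsto_pot_atBot (hη : Integrable (fun x => x) η) :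
    Tendsto (pot η) atBot (nhds 0) := by
  rw [← integral_zero ℝ ℝ]
  refine tendsto_integral_filter_of_dominated_convergence _ (Eventually.of_forall fun k =>
    (integrable_put hη k).aestronglyMeasurable) ?_ (integrable_put hη 0) ?_
  · filter_upwards [eventually_le_atBot 0] with k hk
    refine Eventually.of_forall fun x => ?_
    rw [Real.norm_of_nonneg (le_max_right _ _)]
    exact max_le_max (by linarith) le_rfl
  · refine Eventually.of_forall fun x => tendsto_const_nhds.congr' ?_
    filter_upwards [eventually_le_atBot x] with k hk
    rw [max_eq_right (by linarith)]

lemma tendsto_cpot_atTop (hη : Integrable (fun x => x) η) :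
    Tendsto (cpot η) atTop (nhds 0) := by
  rw [← integral_zero ℝ ℝ]
  refine tendsto_integral_filter_of_dominated_convergence _ (Eventually.of_forall fun k =>
    (integrable_call hη k).aestronglyMeasurable) ?_ (integrable_call hη 0) ?_
  · filter_upwards [eventually_ge_atTop 0] with k hk
    refine Eventually.of_forall fun x => ?_
    rw [Real.norm_of_nonneg (le_max_right _ _)]
    exact max_le_max (by linarith) le_rfl
  · refine Eventually.of_forall fun x => tendsto_const_nhds.congr' ?_
    filter_upwards [eventually_ge_atTop x] with k hk
    rw [max_eq_right (by linarith)]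

lemma exists_lt_measure_Iic_ne_zero (hη : Integrable (fun x => x) η) {k : ℝ}
    (hk : 0 < pot η k) : ∃ a < k, η (Iic a) ≠ 0 := by
  obtain ⟨a, hak, ha⟩ :=
    (continuousAt_const.eventually_lt (continuous_pot hη).continuousAt hk).exists_lt
  refine ⟨a, hak, fun h => ha.ne' (pot_eq_zero_of_measure_Iio_eq_zero ?_)⟩
  exact measure_mono_null Iio_subset_Iic_self h

lemma exists_gt_measure_Ici_ne_zero (hη : Integrable (fun x => x) η) {k : ℝ}
    (hk : 0 < cpot η k) : ∃ b, k < b ∧ η (Ici b) ≠ 0 := by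
  obtain ⟨b, hkb, hb⟩ :=
    (continuousAt_const.eventually_lt (continuous_cpot hη).continuousAt hk).exists_gt
  refine ⟨b, hkb, fun h => hb.ne' (cpot_eq_zero_of_measure_Ioi_eq_zero ?_)⟩
  exact measure_mono_null Ioi_subset_Ici_self h

end Potentials

lemma convexOn_affine (A B : ℝ) : ConvexOn ℝ univ (fun x : ℝ => A * x + B) :=
  ((LinearMap.mul ℝ ℝ A).convexOn convex_univ).add (convexOn_const B convex_univ)

lemma Cx.integral_affine_eq {η χ : Measure ℝ} [IsFiniteMeasure η] [IsFiniteMeasure χ]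
    (h : Cx η χ) (hη : Integrable (fun x => x) η) (hχ : Integrable (fun x => x) χ) (A B : ℝ) :
    ∫ x, (A * x + B) ∂η = ∫ x, (A * x + B) ∂χ := by
  have hle := h _ (convexOn_affine A B) (integrable_affine hη A B) (integrable_affine hχ A B)
  have hge := h _ (convexOn_affine (-A) (-B)) (integrable_affine hη _ _) (integrable_affine hχ _ _)
  rw [integral_affine hη, integral_affine hχ] at hle hge ⊢
  linarith

section Sweep

lemma ConvexOn.le_chord {f : ℝ → ℝ} (hf : ConvexOn ℝ univ f) {a b x : ℝ} (hab : a < b)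
    (hx : x ∈ Icc a b) : f x ≤ slope f a b * (x - a) + f a := by
  rcases hx.1.eq_or_lt with rfl | hax
  · simp
  have h := hf.secant_mono (mem_univ a) (mem_univ x) (mem_univ b) hax.ne' hab.ne' hx.2
  rw [div_le_iff₀ (sub_pos.2 hax), ← slope_def_field] at h
  linarith

lemma ConvexOn.chord_le {f : ℝ → ℝ} (hf : ConvexOn ℝ univ f) {a b x : ℝ} (hab : a < b)
    (hx : x ∉ Ioo a b) : slope f a b * (x - a) + f a ≤ f x := by
  rcases le_or_gt x a with hxa | hax
  · rcases hxa.eq_or_lt with rfl | hxa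
    · simp
    have h := hf.secant_mono (mem_univ a) (mem_univ x) (mem_univ b) hxa.ne hab.ne'
      (hxa.trans hab).le
    rw [div_le_iff_of_neg (sub_neg.2 hxa), ← slope_def_field] at h
    linarith
  · have hbx : b ≤ x := not_lt.1 fun hxb => hx ⟨hax, hxb⟩
    have h := hf.secant_mono (mem_univ a) (mem_univ b) (mem_univ x) hab.ne'
      (hab.trans_le hbx).ne' hbx
    rw [le_div_iff₀ (sub_pos.2 (hab.trans_le hbx)), ← slope_def_field] at h
    linarith

lemma integral_pos_of_ae_pos {α : Type*} [MeasurableSpace α] {μ : Measure α} (hμ : μ ≠ 0)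
    {f : α → ℝ} (hf : Integrable f μ)
    (hpos : ∀ᵐ x ∂μ, 0 < f x) : 0 < ∫ x, f x ∂μ := by
  have hsupp : Function.support f =ᵐ[μ] univ := ae_eq_univ.2 <|
    measure_mono_null (fun x hx (h : 0 < f x) => hx (Function.mem_support.2 h.ne'))
      (ae_iff.1 hpos)
  rw [integral_pos_iff_support_of_nonneg_ae (hpos.mono fun _ h => h.le) hf, measure_congr hsupp]
  exact Measure.measure_univ_pos.2 hμ

lemma integrable_of_ae_mem_Icc {μ : Measure ℝ} [IsFiniteMeasure μ] {f : ℝ → ℝ}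
    (hf : Continuous f) {a b : ℝ} (hμ : ∀ᵐ x ∂μ, x ∈ Icc a b) : Integrable f μ := by
  obtain ⟨C, hC⟩ := isCompact_Icc.exists_bound_of_continuousOn hf.continuousOn
  exact Integrable.mono' (integrable_const C) hf.aestronglyMeasurable
    (hμ.mono fun x hx => hC x hx)

variable {ρ τ : Measure ℝ} [IsFiniteMeasure τ] {a b : ℝ}

lemma ConvexOn.integral_chord_le_of_sweep (hab : a < b) (hτ : ∀ᵐ x ∂τ, x ∉ Ioo a b)
    (hτ1 : Integrable (fun x => x) τ)
    (hmoments : ∀ A B : ℝ, ∫ x, (A * x + B) ∂ρ = ∫ x, (A * x + B) ∂τ)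
    {f : ℝ → ℝ} (hf : ConvexOn ℝ univ f) (hfτ : Integrable f τ) :
    ∫ x, (slope f a b * x + (f a - slope f a b * a)) ∂ρ ≤ ∫ x, f x ∂τ :=
  (hmoments _ _).trans_le <| integral_mono_ae (integrable_affine hτ1 _ _) hfτ <|
    hτ.mono fun x hx => by linarith [hf.chord_le hab hx]

variable [IsFiniteMeasure ρ]

lemma ConvexOn.integral_le_of_sweep (hab : a < b) (hρ : ∀ᵐ x ∂ρ, x ∈ Icc a b)
    (hτ : ∀ᵐ x ∂τ, x ∉ Ioo a b) (hρ1 : Integrable (fun x => x) ρ)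
    (hτ1 : Integrable (fun x => x) τ)
    (hmoments : ∀ A B : ℝ, ∫ x, (A * x + B) ∂ρ = ∫ x, (A * x + B) ∂τ)
    {f : ℝ → ℝ} (hf : ConvexOn ℝ univ f) (hfρ : Integrable f ρ) (hfτ : Integrable f τ) :
    ∫ x, f x ∂ρ ≤ ∫ x, f x ∂τ :=
  (integral_mono_ae hfρ (integrable_affine hρ1 _ _)
    (hρ.mono fun x hx => by linarith [hf.le_chord hab hx])).trans
      (hf.integral_chord_le_of_sweep hab hτ hτ1 hmoments hfτ)

lemma put_lt_chord {k x : ℝ} (hk : k ∈ Ioo a b) (hx : x ∈ Ioo a b) :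
    max (k - x) 0 < slope (fun y => max (k - y) 0) a b * (x - a) + max (k - a) 0 := by
  have hba : 0 < b - a := by linarith [hk.1, hk.2]
  rw [slope_def_field, max_eq_left (by linarith [hk.1] : 0 ≤ k - a),
    max_eq_right (by linarith [hk.2] : k - b ≤ 0)]
  rcases le_total x k with hxk | hkx
  · have h : (0 - (k - a)) / (b - a) * (x - a) + (k - a) - max (k - x) 0
        = (x - a) * (b - k) / (b - a) := by
      rw [max_eq_left (by linarith)]; field_simp; ring
    have : 0 < (x - a) * (b - k) / (b - a) :=
      div_pos (mul_pos (by linarith [hx.1]) (by linarith [hk.2])) hba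
    linarith
  · have h : (0 - (k - a)) / (b - a) * (x - a) + (k - a) - max (k - x) 0
        = (k - a) * (b - x) / (b - a) := by
      rw [max_eq_right (by linarith)]; field_simp; ring
    have : 0 < (k - a) * (b - x) / (b - a) :=
      div_pos (mul_pos (by linarith [hk.1]) (by linarith [hx.2])) hba
    linarith

lemma integral_put_lt_of_sweep (hab : a < b) (hρ : ∀ᵐ x ∂ρ, x ∈ Ioo a b) (hρ0 : ρ ≠ 0)
    (hτ : ∀ᵐ x ∂τ, x ∉ Ioo a b) (hρ1 : Integrable (fun x => x) ρ)
    (hτ1 : Integrable (fun x => x) τ)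
    (hmoments : ∀ A B : ℝ, ∫ x, (A * x + B) ∂ρ = ∫ x, (A * x + B) ∂τ)
    {k : ℝ} (hk : k ∈ Ioo a b) :
    ∫ x, max (k - x) 0 ∂ρ < ∫ x, max (k - x) 0 ∂τ := by
  set g : ℝ → ℝ := fun y => max (k - y) 0
  have hgap : 0 < ∫ x, (slope g a b * x + (g a - slope g a b * a) - g x) ∂ρ :=
    integral_pos_of_ae_pos hρ0 ((integrable_affine hρ1 _ _).sub (integrable_put hρ1 k))
    (hρ.mono fun x hx => sub_pos.2 ((put_lt_chord hk hx).trans_eq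
      (by ring : slope g a b * (x - a) + g a = slope g a b * x + (g a - slope g a b * a))))
  rw [integral_sub (integrable_affine hρ1 _ _) (integrable_put hρ1 k)] at hgap
  exact (sub_pos.1 hgap).trans_le
    ((convexOn_put k).integral_chord_le_of_sweep hab hτ hτ1 hmoments (integrable_put hτ1 k))

end Sweep

lemma ofReal_smul_measure_le_self {α : Type*} [MeasurableSpace α] {μ : Measure α} {c : ℝ}
    (hc : c ≤ 1) : ENNReal.ofReal c • μ ≤ μ :=
  Measure.le_iff'.2 fun _ => mul_le_of_le_one_left zero_le (ENNReal.ofReal_le_one.2 hc)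

lemma measureReal_restrict_univ_pos {α : Type*} [MeasurableSpace α] {μ : Measure α}
    [IsFiniteMeasure μ] {s : Set α} (h : μ s ≠ 0) : 0 < (μ.restrict s).real univ := by
  rw [measureReal_restrict_apply_univ]
  exact ENNReal.toReal_pos h (measure_ne_top _ _)

lemma exists_fractions_eq_moments {a b w₀ w₁ w₂ m₀ m₁ m₂ : ℝ} (hw₀ : 0 < w₀) (hw₁ : 0 < w₁)
    (hw₂ : 0 < w₂) (h₀a : a * w₀ < m₀) (h₀b : m₀ < b * w₀) (h₁ : m₁ ≤ a * w₁)
    (h₂ : b * w₂ ≤ m₂) :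
    ∃ r s t : ℝ, 0 < r ∧ r ≤ 1 ∧ 0 ≤ s ∧ s ≤ 1 ∧ 0 ≤ t ∧ t ≤ 1 ∧
      r * w₀ = s * w₁ + t * w₂ ∧ r * m₀ = s * m₁ + t * m₂ := by
  -- Cramer's rule: `D w₀ = P w₁ + Q w₂` and `D m₀ = P m₁ + Q m₂`
  set P := w₀ * m₂ - w₂ * m₀
  set Q := w₁ * m₀ - w₀ * m₁
  set D := w₁ * m₂ - w₂ * m₁
  have hP : 0 < P := by
    have h : P = w₀ * (m₂ - b * w₂) + w₂ * (b * w₀ - m₀) := by ring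
    exact h ▸ add_pos_of_nonneg_of_pos (mul_nonneg hw₀.le (by linarith))
      (mul_pos hw₂ (by linarith))
  have hQ : 0 < Q := by
    have h : Q = w₀ * (a * w₁ - m₁) + w₁ * (m₀ - a * w₀) := by ring
    exact h ▸ add_pos_of_nonneg_of_pos (mul_nonneg hw₀.le (by linarith))
      (mul_pos hw₁ (by linarith))
  have hD : 0 < D := by
    have h : w₀ * D = w₁ * P + w₂ * Q := by ring
    exact pos_of_mul_pos_right (h ▸ add_pos (mul_pos hw₁ hP) (mul_pos hw₂ hQ)) hw₀.le
  have hS : 0 < D + P + Q := by linarith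
  refine ⟨D / (D + P + Q), P / (D + P + Q), Q / (D + P + Q), div_pos hD hS,
    (div_le_one hS).2 (by linarith), (div_pos hP hS).le, (div_le_one hS).2 (by linarith),
    (div_pos hQ hS).le, (div_le_one hS).2 (by linarith), ?_, ?_⟩ <;>
  · field_simp
    ring

lemma exists_sweep {T σ : Measure ℝ} [IsFiniteMeasure T] [IsFiniteMeasure σ]
    (hT1 : Integrable (fun x => x) T) (hσ1 : Integrable (fun x => x) σ) {a b : ℝ}
    (hT : T (Ioo a b) ≠ 0) (hσa : σ (Iic a) ≠ 0) (hσb : σ (Ici b) ≠ 0) :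
    ∃ ρ τ : Measure ℝ, ρ ≤ T ∧ τ ≤ σ ∧ ρ ≠ 0 ∧ (∀ᵐ x ∂ρ, x ∈ Ioo a b) ∧
      (∀ᵐ x ∂τ, x ∉ Ioo a b) ∧ ∀ A B : ℝ, ∫ x, (A * x + B) ∂ρ = ∫ x, (A * x + B) ∂τ := by
  obtain ⟨x₀, hx₀⟩ := nonempty_of_measure_ne_zero hT
  set ρ₀ := T.restrict (Ioo a b)
  set τ₁ := σ.restrict (Iic a)
  set τ₂ := σ.restrict (Ici b)
  have hρ₀ : ρ₀ ≠ 0 := Measure.restrict_eq_zero.not.2 hT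
  have hρ₀1 : Integrable (fun x => x) ρ₀ := hT1.restrict
  have hτ₁1 : Integrable (fun x => x) τ₁ := hσ1.restrict
  have hτ₂1 : Integrable (fun x => x) τ₂ := hσ1.restrict
  have h₀a : 0 < 1 * ∫ x, x ∂ρ₀ + -a * ρ₀.real univ :=
    integral_affine hρ₀1 _ _ ▸ integral_pos_of_ae_pos hρ₀ (integrable_affine hρ₀1 _ _)
      ((ae_restrict_mem measurableSet_Ioo).mono fun x hx => by linarith [hx.1])
  have h₀b : 0 < -1 * ∫ x, x ∂ρ₀ + b * ρ₀.real univ :=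
    integral_affine hρ₀1 _ _ ▸ integral_pos_of_ae_pos hρ₀ (integrable_affine hρ₀1 _ _)
      ((ae_restrict_mem measurableSet_Ioo).mono fun x hx => by linarith [hx.2])
  have h₁ : 0 ≤ -1 * ∫ x, x ∂τ₁ + a * τ₁.real univ :=
    integral_affine hτ₁1 _ _ ▸ integral_nonneg_of_ae ((ae_restrict_mem measurableSet_Iic).mono
      fun x (hx : x ≤ a) => show 0 ≤ -1 * x + a by linarith)
  have h₂ : 0 ≤ 1 * ∫ x, x ∂τ₂ + -b * τ₂.real univ :=
    integral_affine hτ₂1 _ _ ▸ integral_nonneg_of_ae ((ae_restrict_mem measurableSet_Ici).mono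
      fun x (hx : b ≤ x) => show 0 ≤ 1 * x + -b by linarith)
  obtain ⟨r, s, t, hr, hr1, hs, hs1, ht, ht1, hmass, hmean⟩ := exists_fractions_eq_moments
    (a := a) (b := b) (m₀ := ∫ x, x ∂ρ₀) (m₁ := ∫ x, x ∂τ₁) (m₂ := ∫ x, x ∂τ₂)
    (measureReal_restrict_univ_pos hT) (measureReal_restrict_univ_pos hσa)
    (measureReal_restrict_univ_pos hσb) (by linarith) (by linarith) (by linarith) (by linarith)
  refine ⟨ENNReal.ofReal r • ρ₀, ENNReal.ofReal s • τ₁ + ENNReal.ofReal t • τ₂, ?_, ?_, ?_, ?_,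
    ?_, fun A B => ?_⟩
  · exact (ofReal_smul_measure_le_self hr1).trans Measure.restrict_le_self
  · calc _ ≤ τ₁ + τ₂ := add_le_add (ofReal_smul_measure_le_self hs1)
          (ofReal_smul_measure_le_self ht1)
      _ = σ.restrict (Iic a ∪ Ici b) := (Measure.restrict_union
          (Iic_disjoint_Ici.2 (not_le.2 (hx₀.1.trans hx₀.2))) measurableSet_Ici).symm
      _ ≤ σ := Measure.restrict_le_self
  · exact Measure.ennreal_smul_eq_zero.not.2 (not_or.2 ⟨(ENNReal.ofReal_pos.2 hr).ne', hρ₀⟩)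
  · exact Measure.ae_smul_measure (ae_restrict_mem measurableSet_Ioo) _
  · refine ae_add_measure_iff.2 ⟨Measure.ae_smul_measure ?_ _, Measure.ae_smul_measure ?_ _⟩
    · exact (ae_restrict_mem measurableSet_Iic).mono fun x hx hx' => not_lt.2 hx hx'.1
    · exact (ae_restrict_mem measurableSet_Ici).mono fun x hx hx' => not_lt.2 hx hx'.2
  · rw [integral_smul_measure, integral_add_measure
      ((integrable_affine hτ₁1 A B).smul_measure ENNReal.ofReal_ne_top)
      ((integrable_affine hτ₂1 A B).smul_measure ENNReal.ofReal_ne_top),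
      integral_smul_measure, integral_smul_measure, integral_affine hρ₀1, integral_affine hτ₁1,
      integral_affine hτ₂1, ENNReal.toReal_ofReal hr.le, ENNReal.toReal_ofReal hs,
      ENNReal.toReal_ofReal ht, smul_eq_mul, smul_eq_mul, smul_eq_mul]
    linear_combination A * hmean + B * hmass

lemma integral_sub_add_measure {α : Type*} [MeasurableSpace α] {T ρ τ : Measure α}
    [IsFiniteMeasure ρ] (hρT : ρ ≤ T) {f : α → ℝ} (hfTρ : Integrable f (T - ρ))
    (hfρ : Integrable f ρ) (hfτ : Integrable f τ) :
    ∫ x, f x ∂(T - ρ + τ) = ∫ x, f x ∂T - ∫ x, f x ∂ρ + ∫ x, f x ∂τ := by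
  conv_rhs => rw [← Measure.sub_add_cancel_of_le hρT]
  rw [integral_add_measure hfTρ hfτ, integral_add_measure hfTρ hfρ]
  ring

lemma IsCounterShadow.measure_Ioo_eq_zero {mu nu T : Measure ℝ} [IsFiniteMeasure nu]
    (hT : IsCounterShadow mu nu T) (hν : Integrable (fun x => x) nu) {a b : ℝ}
    (ha : (nu - T) (Iic a) ≠ 0) (hb : (nu - T) (Ici b) ≠ 0) : T (Ioo a b) = 0 := by
  obtain ⟨hμT, hTν, hmax⟩ := hT
  have : IsFiniteMeasure T := isFiniteMeasure_of_le nu hTν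
  have hT1 : Integrable (fun x => x) T := hν.mono_measure hTν
  by_contra h0
  obtain ⟨k, hk⟩ := nonempty_of_measure_ne_zero h0
  have hab : a < b := hk.1.trans hk.2
  obtain ⟨ρ, τ, hρT, hτν, hρ0, hρ, hτ, hmom⟩ :=
    exists_sweep hT1 (hν.mono_measure Measure.sub_le) h0 ha hb
  have : IsFiniteMeasure ρ := isFiniteMeasure_of_le T hρT
  have : IsFiniteMeasure τ := isFiniteMeasure_of_le _ hτν
  have hρ1 : Integrable (fun x => x) ρ := hT1.mono_measure hρT
  have hτ1 : Integrable (fun x => x) τ := hν.mono_measure (hτν.trans Measure.sub_le)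
  have hρIcc : ∀ᵐ x ∂ρ, x ∈ Icc a b := hρ.mono fun _ hx => Ioo_subset_Icc_self hx
  have hην : T - ρ + τ ≤ nu := calc
    T - ρ + τ ≤ T + (nu - T) := add_le_add Measure.sub_le hτν
    _ = nu := by rw [add_comm, Measure.sub_add_cancel_of_le hTν]
  have : IsFiniteMeasure (T - ρ + τ) := isFiniteMeasure_of_le nu hην
  have hTη : ∀ f : ℝ → ℝ, ConvexOn ℝ univ f → Integrable f (T - ρ + τ) →
      Integrable f T ∧ ∫ x, f x ∂T ≤ ∫ x, f x ∂(T - ρ + τ) := by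
    intro f hf hfη
    have hfTρ : Integrable f (T - ρ) := hfη.mono_measure (Measure.le_add_right le_rfl)
    have hfτ : Integrable f τ := hfη.mono_measure (Measure.le_add_left le_rfl)
    have hfρ : Integrable f ρ := integrable_of_ae_mem_Icc hf.continuous hρIcc
    refine ⟨Measure.sub_add_cancel_of_le hρT ▸ hfTρ.add_measure hfρ, ?_⟩
    rw [integral_sub_add_measure hρT hfTρ hfρ hfτ]
    linarith [hf.integral_le_of_sweep hab hρIcc hτ hρ1 hτ1 hmom hfρ hfτ]
  have hput := hmax (T - ρ + τ)
    (fun f hf hfμ hfη => (hμT f hf hfμ (hTη f hf hfη).1).trans (hTη f hf hfη).2) hην _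
    (convexOn_put k) (integrable_put (hν.mono_measure hην) k) (integrable_put hT1 k)
  rw [integral_sub_add_measure hρT (integrable_put (hT1.mono_measure Measure.sub_le) k)
    (integrable_put hρ1 k) (integrable_put hτ1 k)] at hput
  linarith [integral_put_lt_of_sweep hab hρ hρ0 hτ hρ1 hτ1 hmom hk]

lemma IsCounterShadow.measure_Ioo_eq_zero_of_pos {mu nu T : Measure ℝ} [IsFiniteMeasure nu]
    (hT : IsCounterShadow mu nu T) (hν : Integrable (fun x => x) nu) {u v : ℝ}
    (h : ∀ x ∈ Ioo u v, 0 < pot (nu - T) x ∧ 0 < cpot (nu - T) x) : T (Ioo u v) = 0 := by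
  refine measure_null_of_locally_null _ fun x hx => ?_
  have hσ1 : Integrable (fun x => x) (nu - T) := hν.mono_measure Measure.sub_le
  obtain ⟨a, hax, ha⟩ := exists_lt_measure_Iic_ne_zero hσ1 (h x hx).1
  obtain ⟨b, hxb, hb⟩ := exists_gt_measure_Ici_ne_zero hσ1 (h x hx).2
  exact ⟨Ioo a b, mem_nhdsWithin_of_mem_nhds (Ioo_mem_nhds hax hxb),
    hT.measure_Ioo_eq_zero hν ha hb⟩

lemma exists_pot_eq_affine_of_measure_Ioo_eq_zero {T : Measure ℝ} [IsFiniteMeasure T]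
    (hT1 : Integrable (fun x => x) T) {u v : ℝ} (h : T (Ioo u v) = 0) :
    ∃ A B : ℝ, ∀ x ∈ Icc u v, pot T x = A * x + B := by
  refine ⟨(T.restrict (Iic u)).real univ, -∫ t in Iic u, t ∂T, fun x hx => ?_⟩
  have hae : (fun t => max (x - t) 0) =ᵐ[T] (Iic u).indicator (fun t => -1 * t + x) := by
    filter_upwards [measure_eq_zero_iff_ae_notMem.1 h] with t ht
    by_cases htu : t ≤ u
    · rw [indicator_of_mem (show t ∈ Iic u from htu), max_eq_left (by linarith [hx.1])]
      ring
    · have hvt : v ≤ t := not_lt.1 fun htv => ht ⟨not_le.1 htu, htv⟩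
      rw [indicator_of_notMem (show t ∉ Iic u from htu), max_eq_right (by linarith [hx.2])]
  rw [pot, integral_congr_ae hae, integral_indicator measurableSet_Iic,
    integral_affine hT1.restrict]
  ring

lemma ConvexOn.le_add_of_eqOn_affine {c g : ℝ → ℝ} (hc : ConvexOn ℝ univ c) {A B u v ε : ℝ}
    (hg : ∀ x ∈ Icc u v, g x = A * x + B) (hu : c u ≤ g u + ε) (hv : c v ≤ g v + ε) {x : ℝ}
    (hx : x ∈ Icc u v) : c x ≤ g x + ε := by
  have huv : u ≤ v := hx.1.trans hx.2
  have h := (hc.add (convexOn_affine (-A) (-B))).le_on_segment (mem_univ u) (mem_univ v)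
    ((segment_eq_Icc huv).symm ▸ hx)
  simp only [Pi.add_apply] at h
  rw [hg u (left_mem_Icc.2 huv)] at hu
  rw [hg v (right_mem_Icc.2 huv)] at hv
  have hmax : max (c u + (-A * u + -B)) (c v + (-A * v + -B)) ≤ ε :=
    max_le (by linarith) (by linarith)
  rw [hg x hx]
  linarith [h.trans hmax]

lemma exists_Ioo_forall_lt_of_continuous {D : ℝ → ℝ} (hD : Continuous D) {ε k x y : ℝ}
    (hxk : x ≤ k) (hx : D x ≤ ε) (hky : k ≤ y) (hy : D y ≤ ε) :
    ∃ u v, u ≤ k ∧ k ≤ v ∧ D u ≤ ε ∧ D v ≤ ε ∧ ∀ z ∈ Ioo u v, ε < D z := by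
  have hclosed : IsClosed (D ⁻¹' Iic ε) := isClosed_Iic.preimage hD
  set L := Iic k ∩ D ⁻¹' Iic ε
  set R := Ici k ∩ D ⁻¹' Iic ε
  have hLb : BddAbove L := ⟨k, fun _ h => h.1⟩
  have hRb : BddBelow R := ⟨k, fun _ h => h.1⟩
  have hL : sSup L ∈ L := (isClosed_Iic.inter hclosed).csSup_mem ⟨x, hxk, hx⟩ hLb
  have hR : sInf R ∈ R := (isClosed_Ici.inter hclosed).csInf_mem ⟨y, hky, hy⟩ hRb
  refine ⟨sSup L, sInf R, hL.1, hR.1, hL.2, hR.2, fun z hz => not_le.1 fun hz' => ?_⟩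
  rcases le_total z k with hzk | hkz
  · exact (le_csSup hLb ⟨hzk, hz'⟩).not_gt hz.1
  · exact (csInf_le hRb ⟨hkz, hz'⟩).not_gt hz.2

section Bounds

variable {mu nu T : Measure ℝ} [IsFiniteMeasure T]

lemma Cx.pot_sub_cpot_eq [IsFiniteMeasure mu] (hμT : Cx mu T) (hμ : Integrable (fun x => x) mu)
    (hT1 : Integrable (fun x => x) T) (k : ℝ) :
    pot T k - cpot T k = (mu univ).toReal * k - ∫ x, x ∂mu := by
  rw [pot_sub_cpot hT1, ← hμT.integral_affine_eq hμ hT1, integral_affine hμ, measureReal_def]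
  ring

lemma pot_eq_pot_sub_add [IsFiniteMeasure nu] (hTν : T ≤ nu) (hν : Integrable (fun x => x) nu)
    (k : ℝ) :
    pot nu k = pot (nu - T) k + pot T k := by
  conv_lhs => rw [← Measure.sub_add_cancel_of_le hTν]
  exact pot_add_measure (hν.mono_measure Measure.sub_le) (hν.mono_measure hTν) k

lemma cpot_eq_cpot_sub_add [IsFiniteMeasure nu] (hTν : T ≤ nu)
    (hν : Integrable (fun x => x) nu) (k : ℝ) :
    cpot nu k = cpot (nu - T) k + cpot T k := by
  conv_lhs => rw [← Measure.sub_add_cancel_of_le hTν]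
  exact cpot_add_measure (hν.mono_measure Measure.sub_le) (hν.mono_measure hTν) k

variable [IsFiniteMeasure mu] [IsFiniteMeasure nu]

lemma pot_le_min_of_cx_of_le (hμT : Cx mu T) (hTν : T ≤ nu) (hμ : Integrable (fun x => x) mu)
    (hν : Integrable (fun x => x) nu) (k : ℝ) :
    pot T k ≤ min (pot nu k) (cpot nu k + (mu univ).toReal * k - ∫ x, x ∂mu) := by
  have hput : 0 ≤ pot (nu - T) k := integral_nonneg fun _ => le_max_right _ _
  have hcall : 0 ≤ cpot (nu - T) k := integral_nonneg fun _ => le_max_right _ _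
  have hparity := hμT.pot_sub_cpot_eq hμ (hν.mono_measure hTν) k
  rw [pot_eq_pot_sub_add hTν hν, cpot_eq_cpot_sub_add hTν hν]
  exact le_min (by linarith) (by linarith)

lemma sub_pot_le_of_le_min (hμT : Cx mu T) (hTν : T ≤ nu) (hμ : Integrable (fun x => x) mu)
    (hν : Integrable (fun x => x) nu) {c : ℝ → ℝ}
    (hc : ∀ k, c k ≤ min (pot nu k) (cpot nu k + (mu univ).toReal * k - ∫ x, x ∂mu)) (k : ℝ) :
    c k - pot T k ≤ pot (nu - T) k ∧ c k - pot T k ≤ cpot (nu - T) k := by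
  have h := hc k
  have hparity := hμT.pot_sub_cpot_eq hμ (hν.mono_measure hTν) k
  rw [pot_eq_pot_sub_add hTν hν, cpot_eq_cpot_sub_add hTν hν, le_min_iff] at h
  constructor <;> linarith [h.1, h.2]

end Bounds

theorem stmt15_general (mu nu : Measure ℝ) [IsFiniteMeasure mu] [IsFiniteMeasure nu]
    (hintm : Integrable (fun x => x) mu) (hintn : Integrable (fun x => x) nu)
    (T : Measure ℝ) (c : ℝ → ℝ)
    (hT : IsCounterShadow mu nu T)
    (hc : IsConvexHull
      (fun k => min (pot nu k) (cpot nu k + (mu Set.univ).toReal * k - ∫ x, x ∂mu)) c) :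
    ∀ k, pot T k = c k := by
  obtain ⟨hc_convex, hc_le, hc_max⟩ := hc
  have : IsFiniteMeasure T := isFiniteMeasure_of_le nu hT.2.1
  have hT1 : Integrable (fun x => x) T := hintn.mono_measure hT.2.1
  have hσ1 : Integrable (fun x => x) (nu - T) := hintn.mono_measure Measure.sub_le
  have hgap := sub_pot_le_of_le_min hT.1 hT.2.1 hintm hintn hc_le
  intro k
  refine le_antisymm (hc_max _ (convexOn_pot hT1)
    (pot_le_min_of_cx_of_le hT.1 hT.2.1 hintm hintn) k) (not_lt.1 fun hlt => ?_)
  obtain ⟨ε, hε, hεk⟩ := exists_between (sub_pos.2 hlt)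
  obtain ⟨x, hx, hxk⟩ := (((tendsto_pot_atBot hσ1).eventually (gt_mem_nhds hε)).and
    (eventually_le_atBot k)).exists
  obtain ⟨y, hy, hky⟩ := (((tendsto_cpot_atTop hσ1).eventually (gt_mem_nhds hε)).and
    (eventually_ge_atTop k)).exists
  obtain ⟨u, v, huk, hkv, hu, hv, hmid⟩ := exists_Ioo_forall_lt_of_continuous (ε := ε)
    (D := fun z => c z - pot T z) (hc_convex.continuous.sub (continuous_pot hT1)) hxk
    (by linarith [(hgap x).1]) hky (by linarith [(hgap y).2])
  have hnull := hT.measure_Ioo_eq_zero_of_pos hintn fun z hz =>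
    ⟨by linarith [(hgap z).1, hmid z hz], by linarith [(hgap z).2, hmid z hz]⟩
  obtain ⟨A, B, hAB⟩ := exists_pot_eq_affine_of_measure_Ioo_eq_zero hT1 hnull
  have hk := hc_convex.le_add_of_eqOn_affine (ε := ε) hAB (by linarith) (by linarith) ⟨huk, hkv⟩
  linarith

theorem stmt15 (mu nu : Measure ℝ) [IsFiniteMeasure mu] [IsFiniteMeasure nu]
    (hintm : Integrable (fun x => x) mu) (hintn : Integrable (fun x => x) nu)
    (hE : ECx mu nu) (T : Measure ℝ) (c : ℝ → ℝ)
    (hT : IsCounterShadow mu nu T)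
    (hc : IsConvexHull
      (fun k => min (pot nu k) (cpot nu k + (mu Set.univ).toReal * k - ∫ x, x ∂mu)) c) :
    ∀ k, pot T k = c k :=
  stmt15_general mu nu hintm hintn T c hT hc
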